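/- Let d ≥ 1 and let X be the cross-polytope point set on Ω^d consisting of the N = 4d points ±e_j and ±i·e_j for j = 1, …, d, where e_j is the j-th standard basis vector of ℂ^d. Then X is a triangular complex spherical 3-design on Ω^d. -/

import Mathlib

noncomputable section
open MeasureTheory Metric MvPolynomial ENNReal

instance (d : ℕ) : MeasurableSpace (EuclideanSpace ℂ (Fin d)) := borel _
instance (d : ℕ) : BorelSpace (EuclideanSpace ℂ (Fin d)) := ⟨rfl⟩

/-- The complex unit sphere `Ω^d ⊆ ℂ^d`. -/
abbrev CSph (d : ℕ) : Type := Metric.sphere (0 : EuclideanSpace ℂ (Fin d)) 1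

def csMap {d : ℕ} (f : EuclideanSpace ℂ (Fin d) ≃ₗᵢ[ℂ] EuclideanSpace ℂ (Fin d))
    (z : CSph d) : CSph d :=
  ⟨f z, by
    have hz := z.2
    simp only [mem_sphere_iff_norm, sub_zero] at hz ⊢
    simp [hz]⟩

/-- `μ` is the uniform (unitarily invariant) probability measure on `Ω^d`. -/
def IsUniformC {d : ℕ} (μ : Measure (CSph d)) : Prop :=
  IsProbabilityMeasure μ ∧
    ∀ f : EuclideanSpace ℂ (Fin d) ≃ₗᵢ[ℂ] EuclideanSpace ℂ (Fin d),
      Measure.map (csMap f) μ = μ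

/-- Evaluation of `Q ∈ ℂ[u₁,…,u_d,v₁,…,v_d]` at `u_j = z_j`, `v_j = conj (z_j)`. -/
def evalC {d : ℕ} (Q : MvPolynomial (Fin d ⊕ Fin d) ℂ) (z : CSph d) : ℂ :=
  MvPolynomial.eval
    (Sum.elim (fun j => (z : EuclideanSpace ℂ (Fin d)) j)
      (fun j => (starRingEnd ℂ) ((z : EuclideanSpace ℂ (Fin d)) j))) Q

/-- A finite family of points of `Ω^d` is a triangular complex spherical `t`-design. -/
def IsTriDesign {d : ℕ} (μ : Measure (CSph d)) (t : ℕ)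
    {ι : Type} [Fintype ι] (z : ι → CSph d) : Prop :=
  ∀ Q : MvPolynomial (Fin d ⊕ Fin d) ℂ, Q.totalDegree ≤ t →
    (Fintype.card ι : ℂ)⁻¹ * ∑ i, evalC Q (z i) = ∫ w, evalC Q w ∂μ

/-- the cross-polytope points `±e_j, ±i·e_j` on `Ω^d` -/
def crossPt (d : ℕ) (j : Fin d) (k : Fin 4) : CSph d :=
  ⟨(![1, -1, Complex.I, -Complex.I] k) • EuclideanSpace.single j (1 : ℂ), by
    simp only [mem_sphere_iff_norm, sub_zero, norm_smul, EuclideanSpace.norm_single]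
    fin_cases k <;> simp⟩


/-
The diagonal unitary multiplying one coordinate `z_j` by `i` multiplies the monomial
`z^α conj(z)^β` by `i^(α_j - β_j)`. It preserves `μ` and permutes the cross-polytope, so both the
integral and the average over the cross-polytope vanish on every monomial with
`α_j ≢ β_j (mod 4)` for some `j`. In degree at most `3` the remaining monomials are `1` and
`|z_j|²`; on the latter both sides equal `1/d`, the integral because it does not depend on `j`
(coordinate permutations are unitary) and `∑ⱼ |z_j|² = 1`.
-/

variable {d : ℕ}

def conjCoords (z : CSph d) : Fin d ⊕ Fin d → ℂ :=
  Sum.elim (fun j => (z : EuclideanSpace ℂ (Fin d)) j)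
    (fun j => starRingEnd ℂ ((z : EuclideanSpace ℂ (Fin d)) j))

lemma evalC_eq_eval (Q : MvPolynomial (Fin d ⊕ Fin d) ℂ) (z : CSph d) :
    evalC Q z = eval (conjCoords z) Q := rfl

lemma continuous_coe_apply (j : Fin d) :
    Continuous fun z : CSph d => (z : EuclideanSpace ℂ (Fin d)) j :=
  (continuous_apply j).comp ((PiLp.continuous_ofLp 2 _).comp continuous_subtype_val)

lemma continuous_conjCoords : Continuous (conjCoords (d := d)) := by
  refine continuous_pi fun s => ?_
  rcases s with j | j
  · exact continuous_coe_apply j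
  · exact Complex.continuous_conj.comp (continuous_coe_apply j)

lemma continuous_evalC (Q : MvPolynomial (Fin d ⊕ Fin d) ℂ) : Continuous (evalC Q) :=
  (MvPolynomial.continuous_eval Q).comp continuous_conjCoords

lemma evalC_monomial (v : (Fin d ⊕ Fin d) →₀ ℕ) (z : CSph d) :
    evalC (monomial v 1) z = ∏ s, conjCoords z s ^ v s := by
  rw [evalC_eq_eval, eval_monomial, one_mul, Finsupp.prod_fintype _ _ (fun _ => pow_zero _)]

lemma evalC_eq_sum_monomial (Q : MvPolynomial (Fin d ⊕ Fin d) ℂ) (z : CSph d) :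
    evalC Q z = ∑ v ∈ Q.support, coeff v Q * evalC (monomial v 1) z := by
  conv_lhs => rw [Q.as_sum]
  simp only [evalC_eq_eval, map_sum, eval_monomial, one_mul]

theorem isTriDesign_of_monomial {μ : Measure (CSph d)} [IsFiniteMeasure μ] {t : ℕ}
    {ι : Type} [Fintype ι] {z : ι → CSph d}
    (h : ∀ v : (Fin d ⊕ Fin d) →₀ ℕ, (v.sum fun _ e => e) ≤ t →
      (Fintype.card ι : ℂ)⁻¹ * ∑ i, evalC (monomial v 1) (z i) =
        ∫ w, evalC (monomial v 1) w ∂μ) :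
    IsTriDesign μ t z := by
  intro Q hQ
  have hint (v : (Fin d ⊕ Fin d) →₀ ℕ) : Integrable (evalC (monomial v 1)) μ :=
    (continuous_evalC _).integrable_of_hasCompactSupport (.of_compactSpace _)
  simp_rw [evalC_eq_sum_monomial Q]
  rw [integral_finsetSum _ fun v _ => (hint v).const_mul _, Finset.sum_comm, Finset.mul_sum]
  refine Finset.sum_congr rfl fun v hv => ?_
  rw [integral_const_mul, ← h v ((le_totalDegree hv).trans hQ), ← Finset.mul_sum]
  ring

def phaseRot (j : Fin d) (ω : unitary ℂ) :
    EuclideanSpace ℂ (Fin d) ≃ₗᵢ[ℂ] EuclideanSpace ℂ (Fin d) :=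
  LinearIsometryEquiv.piLpCongrRight 2 fun i =>
    (Pi.mulSingle j ω : Fin d → unitary ℂ) i • LinearIsometryEquiv.refl ℂ ℂ

lemma phaseRot_apply (j : Fin d) (ω : unitary ℂ) (z : EuclideanSpace ℂ (Fin d)) (i : Fin d) :
    phaseRot j ω z i = if i = j then ω * z i else z i := by
  by_cases h : i = j
  · subst h; simp [phaseRot]
  · simp [phaseRot, h]

lemma evalC_monomial_csMap_phaseRot (v : (Fin d ⊕ Fin d) →₀ ℕ) (j : Fin d) (ω : unitary ℂ)
    (z : CSph d) :
    evalC (monomial v 1) (csMap (phaseRot j ω) z) =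
      (ω : ℂ) ^ v (.inl j) * starRingEnd ℂ ω ^ v (.inr j) * evalC (monomial v 1) z := by
  have hfactor (c w : ℂ) (n : ℕ) (i : Fin d) :
      (if i = j then c * w else w) ^ n = (if i = j then c ^ n else 1) * w ^ n := by
    split_ifs <;> simp [mul_pow]
  simp only [evalC_monomial, Fintype.prod_sum_type, conjCoords, Sum.elim_inl, Sum.elim_inr,
    csMap, phaseRot_apply, apply_ite (starRingEnd ℂ), map_mul, hfactor,
    Finset.prod_mul_distrib, Finset.prod_ite_eq', Finset.mem_univ, if_true]
  ring

lemma I_pow_mul_conj_I_pow_eq_one_iff (a b : ℕ) :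
    Complex.I ^ a * starRingEnd ℂ Complex.I ^ b = 1 ↔ (4 : ℤ) ∣ (a : ℤ) - b := by
  rw [Complex.conj_I, ← Complex.inv_I, inv_pow, ← zpow_natCast, ← zpow_natCast,
    ← div_eq_mul_inv, ← zpow_sub₀ Complex.I_ne_zero]
  exact_mod_cast Complex.isPrimitiveRoot_I.zpow_eq_one_iff_dvd _

def unitaryI : unitary ℂ := ⟨Complex.I, by simp [Unitary.mem_iff]⟩

@[simp] lemma coe_unitaryI : (unitaryI : ℂ) = Complex.I := rfl

theorem apply_evalC_monomial_eq_zero {L : (CSph d → ℂ) → ℂ}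
    (hL_mul : ∀ (c : ℂ) (g : CSph d → ℂ), L (fun z => c * g z) = c * L g) {j : Fin d}
    (hL_phase : ∀ g : CSph d → ℂ, L (g ∘ csMap (phaseRot j unitaryI)) = L g)
    {v : (Fin d ⊕ Fin d) →₀ ℕ} (hv : ¬ (4 : ℤ) ∣ (v (.inl j) : ℤ) - v (.inr j)) :
    L (evalC (monomial v 1)) = 0 := by
  have hrot : L (evalC (monomial v 1)) =
      Complex.I ^ v (.inl j) * starRingEnd ℂ Complex.I ^ v (.inr j) *
        L (evalC (monomial v 1)) := by
    have hcomp : evalC (monomial v 1) ∘ csMap (phaseRot j unitaryI) = fun z =>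
        Complex.I ^ v (.inl j) * starRingEnd ℂ Complex.I ^ v (.inr j) * evalC (monomial v 1) z :=
      funext fun z => by
        rw [Function.comp_apply, evalC_monomial_csMap_phaseRot, coe_unitaryI]
    rw [← hL_mul, ← hcomp, hL_phase]
  exact (mul_left_eq_self₀.mp hrot.symm).resolve_left
    ((I_pow_mul_conj_I_pow_eq_one_iff _ _).not.mpr hv)

lemma integral_comp_csMap {G : Type*} [NormedAddCommGroup G] [NormedSpace ℝ G]
    {μ : Measure (CSph d)} {f : EuclideanSpace ℂ (Fin d) ≃ₗᵢ[ℂ] EuclideanSpace ℂ (Fin d)}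
    (hf : Measure.map (csMap f) μ = μ) (g : CSph d → G) :
    ∫ w, g (csMap f w) ∂μ = ∫ w, g w ∂μ := by
  have hcont : Continuous (csMap f) :=
    (f.continuous.comp continuous_subtype_val).subtype_mk _
  have hinj : Function.Injective (csMap f) := fun a b h =>
    Subtype.ext (f.injective (congrArg Subtype.val h))
  exact MeasurePreserving.integral_comp ⟨hcont.measurable, hf⟩
    (hcont.isClosedEmbedding hinj).measurableEmbedding g

lemma integral_evalC_monomial_eq_zero {μ : Measure (CSph d)}
    (hμ : ∀ f, Measure.map (csMap f) μ = μ) {j : Fin d} {v : (Fin d ⊕ Fin d) →₀ ℕ}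
    (hv : ¬ (4 : ℤ) ∣ (v (.inl j) : ℤ) - v (.inr j)) :
    ∫ w, evalC (monomial v 1) w ∂μ = 0 :=
  apply_evalC_monomial_eq_zero (L := fun g => ∫ w, g w ∂μ) (fun c g => integral_const_mul c g)
    (fun g => integral_comp_csMap (hμ _) g) hv

lemma crossPt_apply (j : Fin d) (k : Fin 4) (i : Fin d) :
    (crossPt d j k : EuclideanSpace ℂ (Fin d)) i =
      if i = j then ![1, -1, Complex.I, -Complex.I] k else 0 := by
  simp [crossPt, PiLp.single_apply]

lemma csMap_phaseRot_crossPt_of_ne {j j' : Fin d} (h : j' ≠ j) (k : Fin 4) :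
    csMap (phaseRot j unitaryI) (crossPt d j' k) = crossPt d j' k := by
  ext i
  simp only [csMap, phaseRot_apply, crossPt_apply]
  split_ifs <;> simp_all

-- Multiplication by `i` permutes `![1, -1, i, -i]` as `0 ↦ 2 ↦ 1 ↦ 3 ↦ 0`.
lemma csMap_phaseRot_crossPt (j : Fin d) (k : Fin 4) :
    csMap (phaseRot j unitaryI) (crossPt d j k) = crossPt d j (![2, 3, 1, 0] k) := by
  ext i
  simp only [csMap, phaseRot_apply, crossPt_apply]
  split_ifs <;> fin_cases k <;> simp

lemma sum_crossPt_comp_phaseRot (g : CSph d → ℂ) (j : Fin d) :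
    ∑ p : Fin d × Fin 4, g (csMap (phaseRot j unitaryI) (crossPt d p.1 p.2)) =
      ∑ p : Fin d × Fin 4, g (crossPt d p.1 p.2) := by
  rw [Fintype.sum_prod_type, Fintype.sum_prod_type]
  refine Finset.sum_congr rfl fun j' _ => ?_
  obtain rfl | h := eq_or_ne j' j
  · simp only [csMap_phaseRot_crossPt, Fin.sum_univ_four, Fin.isValue, Matrix.cons_val_zero,
      Matrix.cons_val_one, Matrix.cons_val]
    ring
  · simp only [csMap_phaseRot_crossPt_of_ne h]

lemma sum_crossPt_evalC_monomial_eq_zero {j : Fin d} {v : (Fin d ⊕ Fin d) →₀ ℕ}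
    (hv : ¬ (4 : ℤ) ∣ (v (.inl j) : ℤ) - v (.inr j)) :
    ∑ p : Fin d × Fin 4, evalC (monomial v 1) (crossPt d p.1 p.2) = 0 :=
  apply_evalC_monomial_eq_zero (L := fun g => ∑ p : Fin d × Fin 4, g (crossPt d p.1 p.2))
    (fun _ _ => (Finset.mul_sum _ _ _).symm) (sum_crossPt_comp_phaseRot · j) hv

lemma evalC_monomial_pair (j : Fin d) (z : CSph d) :
    evalC (monomial (Finsupp.single (.inl j) 1 + Finsupp.single (.inr j) 1) 1) z =
      ((‖(z : EuclideanSpace ℂ (Fin d)) j‖ ^ 2 : ℝ) : ℂ) := by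
  rw [evalC_eq_eval, ← mul_one (1 : ℂ), ← monomial_mul, map_mul, ← X, ← X, eval_X, eval_X]
  simp [conjCoords, Complex.mul_conj']

lemma integral_norm_sq_apply {μ : Measure (CSph d)} (hμ : IsUniformC μ) (j : Fin d) :
    ∫ w, ‖(w : EuclideanSpace ℂ (Fin d)) j‖ ^ 2 ∂μ = (d : ℝ)⁻¹ := by
  have := hμ.1
  have hsame (i : Fin d) : ∫ w, ‖(w : EuclideanSpace ℂ (Fin d)) i‖ ^ 2 ∂μ =
      ∫ w, ‖(w : EuclideanSpace ℂ (Fin d)) j‖ ^ 2 ∂μ := by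
    rw [← integral_comp_csMap (hμ.2 (LinearIsometryEquiv.piLpCongrLeft 2 ℂ ℂ (Equiv.swap i j)))]
    simp [csMap, LinearIsometryEquiv.piLpCongrLeft_apply]
  have hsum : ∑ i, ∫ w, ‖(w : EuclideanSpace ℂ (Fin d)) i‖ ^ 2 ∂μ = 1 := by
    rw [← integral_finsetSum]
    · simp [← EuclideanSpace.norm_sq_eq]
    · intro i _
      exact ((continuous_coe_apply i).norm.pow 2).integrable_of_hasCompactSupport
        (.of_compactSpace _)
  simp only [hsame, Finset.sum_const, Finset.card_univ, Fintype.card_fin, nsmul_eq_mul] at hsum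
  exact eq_inv_of_mul_eq_one_right hsum

lemma sum_crossPt_norm_sq_apply (j : Fin d) :
    ∑ p : Fin d × Fin 4, ‖(crossPt d p.1 p.2 : EuclideanSpace ℂ (Fin d)) j‖ ^ 2 = 4 := by
  simp only [crossPt_apply, Fintype.sum_prod_type]
  rw [Finset.sum_eq_single j (fun i _ hi => by simp [hi.symm]) (by simp)]
  simp [Fin.sum_univ_four]
  norm_num

lemma exists_not_four_dvd_or_eq_zero_or_eq_pair {v : (Fin d ⊕ Fin d) →₀ ℕ}
    (hv : (v.sum fun _ e => e) ≤ 3) :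
    (∃ j, ¬ (4 : ℤ) ∣ (v (.inl j) : ℤ) - v (.inr j)) ∨ v = 0 ∨
      ∃ j, v = Finsupp.single (.inl j) 1 + Finsupp.single (.inr j) 1 := by
  rw [Finsupp.sum_fintype _ _ fun _ => rfl, Fintype.sum_sum_type] at hv
  by_cases hbal : ∀ j, v (.inl j) = v (.inr j)
  swap
  · push Not at hbal
    obtain ⟨j, hj⟩ := hbal
    have hl := Finset.single_le_sum (fun i _ => Nat.zero_le (v (.inl i))) (Finset.mem_univ j)
    have hr := Finset.single_le_sum (fun i _ => Nat.zero_le (v (.inr i))) (Finset.mem_univ j)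
    exact Or.inl ⟨j, by omega⟩
  right
  simp only [← hbal] at hv
  by_cases h0 : ∀ j, v (.inl j) = 0
  · left
    ext (j | j) <;> simp [h0, ← hbal]
  push Not at h0
  obtain ⟨j, hj⟩ := h0
  have hrest := Finset.add_sum_erase Finset.univ (fun i => v (.inl i)) (Finset.mem_univ j)
  have hj1 : v (.inl j) = 1 := by omega
  have hrest0 : ∑ i ∈ Finset.univ.erase j, v (.inl i) = 0 := by omega
  have hzero : ∀ i ≠ j, v (.inl i) = 0 := fun i hi =>
    Finset.sum_eq_zero_iff.mp hrest0 i (Finset.mem_erase.mpr ⟨hi, Finset.mem_univ i⟩)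
  refine Or.inr ⟨j, ?_⟩
  ext (i | i) <;> obtain rfl | hi := eq_or_ne i j <;> simp_all

/-- the cross-polytope `±e_j, ±i·e_j` is a triangular complex spherical
`3`-design on `Ω^d` (with `4d = Fintype.card (Fin d × Fin 4)` points). -/
theorem crossPolytope_is_three_design (d : ℕ) (hd : 1 ≤ d)
    (μ : Measure (CSph d)) (hμ : IsUniformC μ) :
    IsTriDesign μ 3 (fun p : Fin d × Fin 4 => crossPt d p.1 p.2) := by
  have := hμ.1
  have hcard : (Fintype.card (Fin d × Fin 4) : ℂ) = 4 * d := by simp [mul_comm]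
  have hd0 : (d : ℂ) ≠ 0 := by exact_mod_cast Nat.one_le_iff_ne_zero.mp hd
  refine isTriDesign_of_monomial fun v hv => ?_
  obtain ⟨j, hj⟩ | rfl | ⟨j, rfl⟩ := exists_not_four_dvd_or_eq_zero_or_eq_pair hv
  · rw [sum_crossPt_evalC_monomial_eq_zero hj, integral_evalC_monomial_eq_zero hμ.2 hj, mul_zero]
  · simp [evalC]
    field_simp
  · simp only [evalC_monomial_pair]
    rw [integral_complex_ofReal, ← Complex.ofReal_sum, sum_crossPt_norm_sq_apply,
      integral_norm_sq_apply hμ, hcard]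
    push_cast
    field_simp
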